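/- arXiv:1708.02848 — 2 statements merged into one kernel-verified Lean document; each statement's English description precedes it below -/
import Mathlib

section
/- Let H be a complex inner product space, f ∈ H nonzero, and e_1,…,e_n orthonormal in H. If ‖f − f'‖ ≤ δ with ‖f'‖ ≥ c₀ > 0, then |I(f) − I(f')| ≤ 2δ/c₀, where I(g) := sqrt(∑_j |⟨g, e_j⟩|²)/‖g‖. -/
/-!
Write `P g = √(∑ⱼ ‖⟪g, eⱼ⟫‖²)`. This is the Euclidean norm of the coefficient vector of `g`,
so `P` is subadditive, and by Bessel's inequality `P g ≤ ‖g‖`; hence `P` is 1-Lipschitz, as is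
`‖·‖`. With `r = P f / ‖f‖ ∈ [0, 1]`,
`P f / ‖f‖ - P f' / ‖f'‖ = (P f - P f') / ‖f'‖ + r (‖f'‖ - ‖f‖) / ‖f'‖`,
and both terms are at most `δ / ‖f'‖ ≤ δ / c₀` in absolute value.
-/

open scoped InnerProductSpace

theorem abs_div_sub_div_le_of_abs_sub_le {a b x y δ : ℝ} (ha : 0 ≤ a) (hax : a ≤ x) (hy : 0 < y)
    (hab : |a - b| ≤ δ) (hxy : |x - y| ≤ δ) : |a / x - b / y| ≤ 2 * δ / y := by
  set r := a / x
  have hr0 : 0 ≤ r := div_nonneg ha (ha.trans hax)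
  have hr1 : r ≤ 1 := div_le_one_of_le₀ hax (ha.trans hax)
  -- `r * x = a` also when `x = 0`, since then `a = 0`.
  have hrx : r * x = a := by
    rcases eq_or_ne x 0 with rfl | hx
    · simp [le_antisymm hax ha]
    · exact div_mul_cancel₀ a hx
  have hsplit : r - b / y = (a - b) / y + r * (y - x) / y := by
    field_simp
    linear_combination hrx
  have hsecond : |r * (y - x)| ≤ δ := by
    rw [abs_mul, abs_of_nonneg hr0, abs_sub_comm]
    exact (mul_le_of_le_one_left (abs_nonneg _) hr1).trans hxy
  calc |r - b / y| ≤ |(a - b) / y| + |r * (y - x) / y| := hsplit ▸ abs_add_le _ _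
    _ ≤ δ / y + δ / y := by
        rw [abs_div, abs_div, abs_of_pos hy]
        gcongr
    _ = 2 * δ / y := by ring

section

variable {𝕜 E ι : Type*} [RCLike 𝕜] [NormedAddCommGroup E] [InnerProductSpace 𝕜 E] [Fintype ι]

theorem Orthonormal.sqrt_sum_norm_inner_sq_le_norm {e : ι → E} (he : Orthonormal 𝕜 e) (g : E) :
    √(∑ j, ‖⟪g, e j⟫_𝕜‖ ^ 2) ≤ ‖g‖ := by
  refine Real.sqrt_le_iff.mpr ⟨norm_nonneg g, ?_⟩
  simpa only [norm_inner_symm] using he.sum_inner_products_le (s := Finset.univ) g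

theorem sqrt_sum_norm_inner_sq_eq_norm (e : ι → E) (g : E) :
    √(∑ j, ‖⟪g, e j⟫_𝕜‖ ^ 2) = ‖(WithLp.toLp 2 fun j => ⟪g, e j⟫_𝕜 : EuclideanSpace 𝕜 ι)‖ :=
  (EuclideanSpace.norm_eq (WithLp.toLp 2 fun j => ⟪g, e j⟫_𝕜)).symm

theorem abs_sqrt_sum_norm_inner_sq_sub_le (e : ι → E) (f g : E) :
    |√(∑ j, ‖⟪f, e j⟫_𝕜‖ ^ 2) - √(∑ j, ‖⟪g, e j⟫_𝕜‖ ^ 2)| ≤ √(∑ j, ‖⟪f - g, e j⟫_𝕜‖ ^ 2) := by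
  have hsub : (WithLp.toLp 2 fun j => ⟪f - g, e j⟫_𝕜 : EuclideanSpace 𝕜 ι) =
      (WithLp.toLp 2 fun j => ⟪f, e j⟫_𝕜) - WithLp.toLp 2 fun j => ⟪g, e j⟫_𝕜 := by
    ext j
    simp only [inner_sub_left, WithLp.ofLp_sub, Pi.sub_apply]
  simp only [sqrt_sum_norm_inner_sq_eq_norm e, hsub]
  exact abs_norm_sub_norm_le _ _

end

theorem location_indicator_robustness_general
    {H : Type*} [NormedAddCommGroup H] [InnerProductSpace ℂ H]
    (n : ℕ) (e : Fin n → H) (he : Orthonormal ℂ e)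
    (f f' : H) (c₀ δ : ℝ) (hc₀ : 0 < c₀)
    (hδ : ‖f - f'‖ ≤ δ) (hf' : c₀ ≤ ‖f'‖) :
    |Real.sqrt (∑ j, ‖(inner ℂ f (e j) : ℂ)‖ ^ 2) / ‖f‖ -
      Real.sqrt (∑ j, ‖(inner ℂ f' (e j) : ℂ)‖ ^ 2) / ‖f'‖| ≤ 2 * δ / c₀ := by
  have hδ₀ : 0 ≤ δ := (norm_nonneg _).trans hδ
  have hproj : |√(∑ j, ‖⟪f, e j⟫_ℂ‖ ^ 2) - √(∑ j, ‖⟪f', e j⟫_ℂ‖ ^ 2)| ≤ δ :=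
    ((abs_sqrt_sum_norm_inner_sq_sub_le e f f').trans
      (he.sqrt_sum_norm_inner_sq_le_norm _)).trans hδ
  calc _ ≤ 2 * δ / ‖f'‖ :=
        abs_div_sub_div_le_of_abs_sub_le (Real.sqrt_nonneg _)
          (he.sqrt_sum_norm_inner_sq_le_norm f) (hc₀.trans_le hf') hproj
          ((abs_norm_sub_norm_le f f').trans hδ)
    _ ≤ 2 * δ / c₀ := by gcongr

/-- Robustness of the location indicator: if `‖f − f'‖ ≤ δ` and `‖f'‖ ≥ c₀ > 0`, then
`|I(f) − I(f')| ≤ 2δ/c₀`, where `I(g) = sqrt(∑_j |⟨g, e_j⟩|²)/‖g‖`. -/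
theorem location_indicator_robustness
    {H : Type*} [NormedAddCommGroup H] [InnerProductSpace ℂ H]
    (n : ℕ) (e : Fin n → H) (he : Orthonormal ℂ e)
    (f f' : H) (hf : f ≠ 0) (c₀ δ : ℝ) (hc₀ : 0 < c₀)
    (hδ : ‖f - f'‖ ≤ δ) (hf' : c₀ ≤ ‖f'‖) :
    |Real.sqrt (∑ j, ‖(inner ℂ f (e j) : ℂ)‖ ^ 2) / ‖f‖ -
      Real.sqrt (∑ j, ‖(inner ℂ f' (e j) : ℂ)‖ ^ 2) / ‖f'‖| ≤ 2 * δ / c₀ :=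
  location_indicator_robustness_general n e he f f' c₀ δ hc₀ hδ hf'
end

section
/- Let p ∈ ℝ³ and for z ≠ 0 define ẑ = z/|z|. As |z| → ∞, uniformly for x, y in a bounded set, ∇_x Φ_k(x+z, y) × p = (e^{ik|z| − ik ẑ·y}/(4π|z|)) · ik e^{ik x·ẑ} (ẑ × p) + O(|z|^{−2}). -/
open Matrix

noncomputable def Phi (k : ℝ) (x y : EuclideanSpace ℝ (Fin 3)) : ℂ :=
  Complex.exp (Complex.I * k * ‖x - y‖) / (4 * Real.pi * ‖x - y‖)

noncomputable def gradPhi (k : ℝ) (x y : EuclideanSpace ℝ (Fin 3)) : Fin 3 → ℂ :=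
  fun i => fderiv ℝ (fun w => Phi k w y) x (EuclideanSpace.single i 1)

/-- Complexification of a real vector in `ℝ³`. -/
def toC (v : EuclideanSpace ℝ (Fin 3)) : Fin 3 → ℂ := fun i => (v i : ℂ)

/-!
Put `w = x - y`, so that `x + z - y = z + w` with `w` bounded. The gradient of `Φ_k(·, y)` at
`x + z` is `e^{ikr} (ikr - 1) (z + w) / (4π r³)` with `r = ‖z + w‖`, i.e.
`ik e^{ikr} (z + w) / (4π r²)` up to `O(r⁻²)`. Replacing `(z + w) / r²` by `z / ‖z‖²` costs
`‖w‖ / (r ‖z‖)`, because inversion in the unit sphere scales distances by that factor. Replacing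
the phase `r` by `‖z‖ + ẑ·w` changes `e^{ikr}` by `O(‖w‖² / ‖z‖)`, since the two phases differ by
at most `2 ‖w‖² / ‖z‖` and `t ↦ e^{ikt}` is `|k|`-Lipschitz. Both errors are `O(‖z‖⁻²)` after the
prefactors, and the bilinear cross product with `p` keeps them so.
-/

open Complex
open scoped Real RealInnerProductSpace

section InnerProductSpace

variable {E : Type*} [NormedAddCommGroup E] [InnerProductSpace ℝ E]

theorem abs_norm_add_sub_norm_add_inner_le {z : E} (hz : z ≠ 0) (w : E) :
    |‖z + w‖ - (‖z‖ + ⟪‖z‖⁻¹ • z, w⟫)| ≤ 2 * ‖w‖ ^ 2 / ‖z‖ := by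
  have hs : 0 < ‖z‖ := norm_pos_iff.mpr hz
  set s := ‖z‖
  set r := ‖z + w‖
  set a := ⟪z, w⟫
  have hr2 : r ^ 2 = s ^ 2 + 2 * a + ‖w‖ ^ 2 := norm_add_sq_real z w
  have ha : |a| ≤ s * ‖w‖ := abs_real_inner_le_norm z w
  have hrs : |s - r| ≤ ‖w‖ := by simpa using abs_norm_sub_norm_le z (z + w)
  set X := r - (s + ⟪s⁻¹ • z, w⟫)
  have hX : X * (s * (r + s)) = a * (s - r) + s * ‖w‖ ^ 2 := by
    simp only [X, real_inner_smul_left]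
    field_simp
    linear_combination s * hr2
  have hXrs : |X| * (r + s) ≤ 2 * ‖w‖ ^ 2 := by
    refine le_of_mul_le_mul_right ?_ hs
    calc |X| * (r + s) * s = |a * (s - r) + s * ‖w‖ ^ 2| := by
          rw [← hX, abs_mul, abs_of_pos (by positivity : 0 < s * (r + s))]; ring
      _ ≤ |a * (s - r)| + |s * ‖w‖ ^ 2| := abs_add_le _ _
      _ = |a| * |s - r| + s * ‖w‖ ^ 2 := by
          rw [abs_mul, abs_of_nonneg (by positivity : 0 ≤ s * ‖w‖ ^ 2)]
      _ ≤ s * ‖w‖ * ‖w‖ + s * ‖w‖ ^ 2 := by gcongr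
      _ = 2 * ‖w‖ ^ 2 * s := by ring
  rw [le_div_iff₀ hs]
  nlinarith [abs_nonneg X, norm_nonneg (z + w)]

theorem hasFDerivAt_norm_of_ne_zero {x : E} (hx : x ≠ 0) :
    HasFDerivAt (‖·‖) (‖x‖⁻¹ • innerSL ℝ x) x := by
  have h := (hasStrictFDerivAt_norm_sq x).hasFDerivAt.sqrt (by positivity)
  simp only [Real.sqrt_sq (norm_nonneg _)] at h
  convert h using 1
  ext v
  simp only [_root_.smul_apply, coe_innerSL_apply, smul_eq_mul, nsmul_eq_mul,
    Nat.cast_ofNat]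
  field_simp

end InnerProductSpace

theorem norm_exp_I_mul_mul (k t : ℝ) : ‖exp (I * k * t)‖ = 1 := by
  rw [mul_assoc, ← ofReal_mul, norm_exp_I_mul_ofReal]

theorem norm_exp_I_mul_sub_exp_I_mul_le (k a b : ℝ) :
    ‖exp (I * k * a) - exp (I * k * b)‖ ≤ |k| * |a - b| := by
  have h : exp (I * k * a) - exp (I * k * b) =
      exp (I * ↑(k * b)) * (exp (I * ↑(k * (a - b))) - 1) := by
    rw [mul_sub, ← Complex.exp_add]; push_cast; ring_nf
  rw [h, norm_mul, norm_exp_I_mul_ofReal, one_mul, ← abs_mul, ← Real.norm_eq_abs]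
  exact Real.norm_exp_I_mul_ofReal_sub_one_le

theorem norm_cross_le {R : Type*} [NormedCommRing R] (v w : Fin 3 → R) :
    ‖v ⨯₃ w‖ ≤ 2 * ‖v‖ * ‖w‖ := by
  have hterm : ∀ i j l m, ‖v i * w j - v l * w m‖ ≤ 2 * ‖v‖ * ‖w‖ := fun i j l m =>
    calc ‖v i * w j - v l * w m‖ ≤ ‖v i‖ * ‖w j‖ + ‖v l‖ * ‖w m‖ :=
          (norm_sub_le _ _).trans (add_le_add (norm_mul_le _ _) (norm_mul_le _ _))
      _ ≤ ‖v‖ * ‖w‖ + ‖v‖ * ‖w‖ := by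
          gcongr <;> exact norm_le_pi_norm _ _
      _ = 2 * ‖v‖ * ‖w‖ := by ring
  refine (pi_norm_le_iff_of_nonneg (by positivity)).mpr fun i => ?_
  fin_cases i <;> exact hterm ..

theorem hasDerivAt_exp_I_mul_div {k t : ℝ} (ht : t ≠ 0) :
    HasDerivAt (fun t : ℝ => exp (I * k * t) / (4 * π * t))
      (exp (I * k * t) * (I * k * t - 1) / (4 * π * t ^ 2)) t := by
  have hofReal : HasDerivAt (fun t : ℝ => (t : ℂ)) 1 t := ofRealCLM.hasDerivAt
  have hnum := (hofReal.const_mul (I * k)).cexp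
  have hden := hofReal.const_mul (4 * π : ℂ)
  refine (hnum.div hden (by simp [ht, Real.pi_ne_zero])).congr_deriv ?_
  field_simp

theorem gradPhi_eq_smul_toC (k : ℝ) {x y : EuclideanSpace ℝ (Fin 3)} (hxy : x ≠ y) :
    gradPhi k x y = (exp (I * k * ‖x - y‖) * (I * k * ‖x - y‖ - 1) / (4 * π * ‖x - y‖ ^ 3)) •
      toC (x - y) := by
  have hne : x - y ≠ 0 := sub_ne_zero.mpr hxy
  have hr : ‖x - y‖ ≠ 0 := norm_ne_zero_iff.mpr hne
  have hdist : HasFDerivAt (fun w => ‖w - y‖) (‖x - y‖⁻¹ • innerSL ℝ (x - y)) x := by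
    exact (hasFDerivAt_norm_of_ne_zero hne).comp x (hasFDerivAt_sub_const y)
  have hPhi := ((hasDerivAt_exp_I_mul_div (k := k) hr).hasFDerivAt.comp x hdist).fderiv
  simp only [Function.comp_def] at hPhi
  funext i
  simp only [gradPhi, Phi]
  rw [hPhi]
  simp only [map_sub, ContinuousLinearMap.comp_smulₛₗ, map_inv₀, Real.ringHom_apply,
    ContinuousLinearMap.comp_sub, _root_.smul_apply, _root_.sub_apply,
    ContinuousLinearMap.comp_apply, coe_innerSL_apply, EuclideanSpace.inner_single_right, one_mul,
    ContinuousLinearMap.toSpanSingleton_apply, real_smul, ofReal_inv, Pi.smul_apply, toC,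
    PiLp.sub_apply, ofReal_sub, smul_eq_mul]
  field_simp

theorem norm_toC_le (v : EuclideanSpace ℝ (Fin 3)) : ‖toC v‖ ≤ ‖v‖ :=
  (pi_norm_le_iff_of_nonneg (norm_nonneg v)).mpr fun i => by
    simpa [toC] using PiLp.norm_apply_le v i

theorem norm_smul_toC_le (c : ℂ) (v : EuclideanSpace ℝ (Fin 3)) : ‖c • toC v‖ ≤ ‖c‖ * ‖v‖ :=
  (norm_smul_le c _).trans (by gcongr; exact norm_toC_le v)

theorem radial_sub_farField_eq (k φ : ℝ) {r : ℝ} (hr : r ≠ 0) (s : ℝ)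
    (u z : EuclideanSpace ℝ (Fin 3)) :
    (exp (I * k * r) * (I * k * r - 1) / (4 * π * r ^ 3)) • toC u -
        (I * k * exp (I * k * φ) / (4 * π * s)) • toC (s⁻¹ • z) =
      (I * k * exp (I * k * r) / (4 * π)) • toC ((1 / r) ^ 2 • u - (1 / s) ^ 2 • z) +
        (I * k * (exp (I * k * r) - exp (I * k * φ)) / (4 * π)) • toC ((1 / s) ^ 2 • z) -
        (exp (I * k * r) / (4 * π)) • toC ((1 / r) ^ 3 • u) := by
  have hrC : (r : ℂ) ≠ 0 := ofReal_ne_zero.mpr hr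
  funext i
  simp only [toC, Pi.add_apply, Pi.sub_apply, Pi.smul_apply, PiLp.sub_apply, PiLp.smul_apply,
    smul_eq_mul]
  push_cast
  field_simp
  ring

theorem norm_radial_sub_farField_le (k : ℝ) {u z : EuclideanSpace ℝ (Fin 3)} (hz : z ≠ 0)
    (hu : 2 * ‖u - z‖ ≤ ‖z‖) :
    ‖(exp (I * k * ‖u‖) * (I * k * ‖u‖ - 1) / (4 * π * ‖u‖ ^ 3)) • toC u -
        (I * k * exp (I * k * (‖z‖ + ⟪‖z‖⁻¹ • z, u - z⟫ : ℝ)) / (4 * π * ‖z‖)) • toC (‖z‖⁻¹ • z)‖ ≤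
      (4 + 2 * |k| * ‖u - z‖ + 2 * k ^ 2 * ‖u - z‖ ^ 2) / (4 * π * ‖z‖ ^ 2) := by
  set s := ‖z‖
  set r := ‖u‖
  set φ := s + ⟪s⁻¹ • z, u - z⟫
  set m := ‖u - z‖
  have hs : 0 < s := norm_pos_iff.mpr hz
  have hr : s / 2 ≤ r := by
    have := norm_sub_norm_le z (z - u)
    rw [sub_sub_cancel, norm_sub_rev] at this
    linarith
  have hr0 : 0 < r := by linarith
  have hu0 : u ≠ 0 := norm_pos_iff.mp hr0
  have hφ : |r - φ| ≤ 2 * m ^ 2 / s := by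
    simpa [φ] using abs_norm_add_sub_norm_add_inner_le hz (u - z)
  have h4π : ‖(4 * π : ℂ)‖ = 4 * π := by
    rw [norm_mul, norm_real, Real.norm_of_nonneg Real.pi_pos.le]; norm_num
  have hA : ‖(I * k * exp (I * k * r) / (4 * π)) • toC ((1 / r) ^ 2 • u - (1 / s) ^ 2 • z)‖ ≤
      |k| / (4 * π) * (2 * m / s ^ 2) := by
    refine (norm_smul_toC_le _ _).trans ?_
    rw [← dist_eq_norm, dist_div_norm_sq_smul hu0 hz, norm_div, h4π, norm_mul, norm_mul, norm_I,
      norm_real, norm_exp_I_mul_mul, dist_eq_norm, Real.norm_eq_abs, one_mul, mul_one]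
    calc |k| / (4 * π) * (1 ^ 2 / (r * s) * m) ≤ |k| / (4 * π) * (m / (s / 2 * s)) := by
          rw [one_pow, one_div_mul_eq_div]; gcongr
      _ = |k| / (4 * π) * (2 * m / s ^ 2) := by field_simp
  have hB : ‖(I * k * (exp (I * k * r) - exp (I * k * φ)) / (4 * π)) • toC ((1 / s) ^ 2 • z)‖ ≤
      |k| * (|k| * (2 * m ^ 2 / s)) / (4 * π) * (1 / s) := by
    refine (norm_smul_toC_le _ _).trans ?_
    rw [norm_div, h4π, norm_mul, norm_mul, norm_I, norm_real, Real.norm_eq_abs, norm_smul,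
      norm_pow, Real.norm_of_nonneg (by positivity : 0 ≤ 1 / s), one_mul]
    have hdiff : ‖exp (I * k * r) - exp (I * k * φ)‖ ≤ |k| * (2 * m ^ 2 / s) :=
      (norm_exp_I_mul_sub_exp_I_mul_le k r φ).trans (by gcongr)
    calc |k| * ‖exp (I * k * r) - exp (I * k * φ)‖ / (4 * π) * ((1 / s) ^ 2 * s)
        ≤ |k| * (|k| * (2 * m ^ 2 / s)) / (4 * π) * ((1 / s) ^ 2 * s) := by gcongr
      _ = _ := by field_simp
  have hC : ‖(exp (I * k * r) / (4 * π)) • toC ((1 / r) ^ 3 • u)‖ ≤ 1 / (4 * π) * (4 / s ^ 2) := by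
    refine (norm_smul_toC_le _ _).trans ?_
    rw [norm_div, h4π, norm_exp_I_mul_mul, norm_smul, norm_pow,
      Real.norm_of_nonneg (by positivity : 0 ≤ 1 / r)]
    calc 1 / (4 * π) * ((1 / r) ^ 3 * r) = 1 / (4 * π) * (1 / r ^ 2) := by field_simp
      _ ≤ 1 / (4 * π) * (1 / (s / 2) ^ 2) := by gcongr
      _ = 1 / (4 * π) * (4 / s ^ 2) := by field_simp; ring
  rw [radial_sub_farField_eq k φ hr0.ne']
  calc _ ≤ _ := norm_sub_le_of_le (norm_add_le_of_le hA hB) hC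
    _ = _ := by field_simp; linear_combination 2 * m ^ 2 * sq_abs k

theorem norm_gradPhi_sub_farField_le (k : ℝ) {x y z : EuclideanSpace ℝ (Fin 3)} (hz : z ≠ 0)
    (hxy : 2 * ‖x - y‖ ≤ ‖z‖) :
    ‖gradPhi k (x + z) y -
        (I * k * exp (I * k * (‖z‖ + ⟪‖z‖⁻¹ • z, x - y⟫ : ℝ)) / (4 * π * ‖z‖)) • toC (‖z‖⁻¹ • z)‖ ≤
      (4 + 2 * |k| * ‖x - y‖ + 2 * k ^ 2 * ‖x - y‖ ^ 2) / (4 * π * ‖z‖ ^ 2) := by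
  have hu : x + z - y - z = x - y := by abel
  have hne : x + z ≠ y := by
    rintro rfl
    rw [sub_add_cancel_left, norm_neg] at hxy
    exact hz (norm_le_zero_iff.mp (by linarith))
  rw [gradPhi_eq_smul_toC k hne, ← hu]
  exact norm_radial_sub_farField_le k hz (hu ▸ hxy)

theorem magnetic_dipole_asymptotics_general (k : ℝ) (p : EuclideanSpace ℝ (Fin 3)) :
    ∀ M : ℝ, 0 < M → ∃ C R : ℝ, 0 < C ∧ 0 < R ∧
      ∀ x y z : EuclideanSpace ℝ (Fin 3), ‖x‖ ≤ M → ‖y‖ ≤ M → R ≤ ‖z‖ →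
        ‖crossProduct (gradPhi k (x + z) y) (toC p) -
            (Complex.exp (Complex.I * k * ‖z‖ - Complex.I * k * (inner ℝ ((‖z‖)⁻¹ • z) y : ℝ))
                / (4 * Real.pi * ‖z‖)) •
              ((Complex.I * k * Complex.exp (Complex.I * k * (inner ℝ x ((‖z‖)⁻¹ • z) : ℝ))) •
                crossProduct (toC ((‖z‖)⁻¹ • z)) (toC p))‖
          ≤ C / ‖z‖ ^ 2 := by
  intro M hM
  refine ⟨2 * ((4 + 4 * |k| * M + 8 * k ^ 2 * M ^ 2) / (4 * π)) * ‖p‖ + 1, 4 * M, by positivity,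
    by positivity, fun x y z hx hy hz => ?_⟩
  have hxy : ‖x - y‖ ≤ 2 * M := (norm_sub_le x y).trans (by linarith)
  have hz0 : z ≠ 0 := norm_pos_iff.mp (by linarith)
  have hcoeff : exp (I * k * ‖z‖ - I * k * (⟪‖z‖⁻¹ • z, y⟫ : ℝ)) / (4 * π * ‖z‖) *
        (I * k * exp (I * k * (⟪x, ‖z‖⁻¹ • z⟫ : ℝ))) =
      I * k * exp (I * k * (‖z‖ + ⟪‖z‖⁻¹ • z, x - y⟫ : ℝ)) / (4 * π * ‖z‖) := by
    rw [div_mul_eq_mul_div, mul_left_comm, ← exp_add, inner_sub_right, real_inner_comm x]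
    push_cast
    ring_nf
  rw [smul_smul, ← LinearMap.map_smul₂, ← LinearMap.map_sub₂, hcoeff]
  calc _ ≤ 2 * ‖_‖ * ‖toC p‖ := norm_cross_le _ _
    _ ≤ 2 * ((4 + 4 * |k| * M + 8 * k ^ 2 * M ^ 2) / (4 * π * ‖z‖ ^ 2)) * ‖p‖ := by
      gcongr
      · refine (norm_gradPhi_sub_farField_le k hz0 (by linarith)).trans ?_
        have hsq : ‖x - y‖ ^ 2 ≤ (2 * M) ^ 2 := pow_le_pow_left₀ (norm_nonneg _) hxy 2
        gcongr ?_ / _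
        nlinarith [mul_le_mul_of_nonneg_left hxy (abs_nonneg k),
          mul_le_mul_of_nonneg_left hsq (sq_nonneg k)]
      · exact norm_toC_le p
    _ = 2 * ((4 + 4 * |k| * M + 8 * k ^ 2 * M ^ 2) / (4 * π)) * ‖p‖ / ‖z‖ ^ 2 := by ring
    _ ≤ _ := by gcongr ?_ / _; linarith

/-- Magnetic-field half of Lemma 2.1: as `|z| → ∞`, uniformly for `x, y` in a bounded set,
`∇_x Φ_k(x+z, y) × p = (e^{ik|z| − ik ẑ·y}/(4π|z|)) · ik e^{ik x·ẑ} (ẑ × p) + O(|z|^{−2})`. -/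
theorem magnetic_dipole_asymptotics (k : ℝ) (hk : 0 < k) (p : EuclideanSpace ℝ (Fin 3)) :
    ∀ M : ℝ, 0 < M → ∃ C R : ℝ, 0 < C ∧ 0 < R ∧
      ∀ x y z : EuclideanSpace ℝ (Fin 3), ‖x‖ ≤ M → ‖y‖ ≤ M → R ≤ ‖z‖ →
        ‖crossProduct (gradPhi k (x + z) y) (toC p) -
            (Complex.exp (Complex.I * k * ‖z‖ - Complex.I * k * (inner ℝ ((‖z‖)⁻¹ • z) y : ℝ))
                / (4 * Real.pi * ‖z‖)) •
              ((Complex.I * k * Complex.exp (Complex.I * k * (inner ℝ x ((‖z‖)⁻¹ • z) : ℝ))) •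
                crossProduct (toC ((‖z‖)⁻¹ • z)) (toC p))‖
          ≤ C / ‖z‖ ^ 2 :=
  magnetic_dipole_asymptotics_general k p
end
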